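/- Let C be a circuit of the avoidance transversal matroid M = ([n], r) with presentation (S_1,…,S_k), and let φ(M) be the transversal q-matroid on F_q^n with presentation (φ(S_1),…,φ(S_k)). Then φ(C) is a cyclic space of φ(M): φ(C) is dependent in φ(M), but every hyperplane (codimension-1 subspace) of φ(C) is independent in φ(M). -/

import Mathlib

open Submodule

/-- `X` has an avoidance transversal of the family `A`: an injection `f` from `X`
into the index type with `x ∉ A (f x)` for all `x ∈ X`. -/
def AvoidsT {α ι : Type*} (A : ι → Set α) (X : Finset α) : Prop :=
  ∃ f : {x // x ∈ X} → ι, Function.Injective f ∧ ∀ x : {x // x ∈ X}, (x : α) ∉ A (f x)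

/-- The rank function of the avoidance transversal matroid with presentation `A`:
the maximum size of a subset of `X` admitting an avoidance transversal. -/
noncomputable def atRank {α ι : Type*} (A : ι → Set α) (X : Finset α) : ℕ :=
  sSup {m | ∃ Y : Finset α, Y ⊆ X ∧ AvoidsT A Y ∧ Y.card = m}

/-- `W` is a partial q-transversal of the family of subspaces `X`: every linear
basis of `W` admits an avoidance transversal of `X`. These are the independent
spaces of the transversal q-matroid with presentation `X`. -/
def IsPartialQT {𝔽 V ι : Type*} [Field 𝔽] [AddCommGroup V] [Module 𝔽 V]
    (X : ι → Submodule 𝔽 V) (W : Submodule 𝔽 V) : Prop :=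
  ∀ β : Finset V, (β : Set V) ⊆ (W : Set V) →
    LinearIndependent 𝔽 (fun b : {x // x ∈ β} => (b : V)) →
    span 𝔽 (β : Set V) = W →
    AvoidsT (fun i => ((X i : Submodule 𝔽 V) : Set V)) β

/-- The rank function of the transversal q-matroid with presentation `X`. -/
noncomputable def qtRank {𝔽 V ι : Type*} [Field 𝔽] [AddCommGroup V] [Module 𝔽 V]
    (X : ι → Submodule 𝔽 V) (W : Submodule 𝔽 V) : ℕ :=
  sSup {d | ∃ U : Submodule 𝔽 V, U ≤ W ∧ IsPartialQT X U ∧ Module.finrank 𝔽 U = d}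

/-- The coordinate subspace `φ(S) = span {e_i : i ∈ S}` of `𝔽^n`. -/
def coordSub (𝔽 : Type*) [Field 𝔽] {n : ℕ} (S : Set (Fin n)) : Submodule 𝔽 (Fin n → 𝔽) :=
  span 𝔽 ((fun i => Pi.single i (1 : 𝔽)) '' S)

/-- The support of a vector: the set of indices of its nonzero coordinates. -/
def suppS {𝔽 : Type*} [Field 𝔽] {n : ℕ} (v : Fin n → 𝔽) : Set (Fin n) := {j | v j ≠ 0}


open Finset Module

/-! Since `e_i ∈ φ(S_j) ↔ i ∈ S_j`, an avoidance transversal of the standard basis of `φ(C)` is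
one of `C`, so `φ(C)` is dependent. For a basis `β` of a hyperplane of `φ(C)` we check Hall's
condition. A subfamily `s ⊆ β` is supported on some `T ⊆ C` with `|s| ≤ |T|` by linear
independence, and `|s| ≤ |C| - 1`, so some `x ∈ C` has `|s| ≤ |T \ {x}|`. A transversal of
`C \ {x}` maps `T \ {x}` injectively to indices `i` with some `j ∉ S i` in the support of a
vector of `s`, and that vector then avoids `φ(S i)`. -/

section CoordinateSubspaces

variable {𝔽 : Type*} [Field 𝔽] {n : ℕ}

lemma coordSub_eq_spanSubset (S : Set (Fin n)) : coordSub 𝔽 S = Pi.spanSubset 𝔽 S := by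
  simp only [coordSub, Pi.spanSubset, Pi.basisFun_apply]

lemma mem_coordSub_iff {S : Set (Fin n)} {v : Fin n → 𝔽} :
    v ∈ coordSub 𝔽 S ↔ ∀ j ∉ S, v j = 0 := by
  rw [coordSub_eq_spanSubset, Pi.mem_spanSubset_iff]

lemma single_mem_coordSub_iff {S : Set (Fin n)} {i : Fin n} :
    Pi.single i (1 : 𝔽) ∈ coordSub 𝔽 S ↔ i ∈ S := by
  rw [mem_coordSub_iff]
  refine ⟨fun h => by_contra fun hi => by simpa using h i hi, fun hi j hj => ?_⟩
  exact Pi.single_eq_of_ne (by rintro rfl; exact hj hi) _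

lemma finrank_coordSub (T : Finset (Fin n)) : finrank 𝔽 (coordSub 𝔽 (T : Set (Fin n))) = #T := by
  rw [coordSub_eq_spanSubset, Pi.dim_spanSubset, Set.ncard_coe_finset]

lemma card_le_card_of_linearIndepOn_of_subset_coordSub {s : Finset (Fin n → 𝔽)}
    {T : Finset (Fin n)} (hs : LinearIndepOn 𝔽 id (s : Set (Fin n → 𝔽)))
    (hsT : (s : Set (Fin n → 𝔽)) ⊆ coordSub 𝔽 (T : Set (Fin n))) : #s ≤ #T := by
  rw [← finrank_span_finset_eq_card hs, ← finrank_coordSub (𝔽 := 𝔽) T]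
  exact Submodule.finrank_mono (span_le.2 hsT)

end CoordinateSubspaces

section Avoidance

variable {α ι : Type*}

lemma AvoidsT.mono {A : ι → Set α} {Y Z : Finset α} (h : AvoidsT A Y) (hZY : Z ⊆ Y) :
    AvoidsT A Z := by
  obtain ⟨f, hf, hfA⟩ := h
  exact ⟨fun z => f ⟨z, hZY z.2⟩, fun a b hab => Subtype.ext (Subtype.mk.inj (hf hab)),
    fun z => hfA _⟩

variable [Fintype ι]

open Classical in
noncomputable def avoidingIndices (A : ι → Set α) (Z : Finset α) : Finset ι :=
  univ.filter fun i => ∃ z ∈ Z, z ∉ A i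

lemma mem_avoidingIndices {A : ι → Set α} {Z : Finset α} {i : ι} :
    i ∈ avoidingIndices A Z ↔ ∃ z ∈ Z, z ∉ A i := by
  simp [avoidingIndices]

lemma AvoidsT.card_le_card_avoidingIndices {A : ι → Set α} {Z : Finset α} (h : AvoidsT A Z) :
    #Z ≤ #(avoidingIndices A Z) := by
  obtain ⟨f, hf, hfA⟩ := h
  rw [← card_attach]
  exact card_le_card_of_injOn f (fun z _ => mem_avoidingIndices.2 ⟨z, z.2, hfA z⟩)
    hf.injOn

lemma avoidsT_of_forall_card_le {A : ι → Set α} {X : Finset α}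
    (h : ∀ Z ⊆ X, #Z ≤ #(avoidingIndices A Z)) : AvoidsT A X := by
  classical
  let t : X → Finset ι := fun x => univ.filter fun i => (x : α) ∉ A i
  have hall : ∀ s : Finset X, #s ≤ #(s.biUnion t) := by
    intro s
    have hs : s.biUnion t = avoidingIndices A (s.map (Function.Embedding.subtype _)) := by
      ext i
      simp [t, mem_avoidingIndices]
    rw [hs, ← card_map (Function.Embedding.subtype _)]
    exact h _ fun x hx => by
      obtain ⟨y, -, rfl⟩ := mem_map.1 hx
      exact y.2
  obtain ⟨f, hf, hft⟩ := (all_card_le_biUnion_card_iff_exists_injective t).1 hall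
  exact ⟨f, hf, fun x => (mem_filter.1 (hft x)).2⟩

end Avoidance

lemma Finset.exists_mem_le_card_erase {α : Type*} [DecidableEq α] {T C : Finset α} {m : ℕ}
    (hTC : T ⊆ C) (hmT : m ≤ #T) (hmC : m < #C) : ∃ x ∈ C, m ≤ #(T.erase x) := by
  by_cases hCT : C ⊆ T
  · obtain ⟨x, hx⟩ := card_pos.1 (by omega : 0 < #C)
    obtain rfl : T = C := Subset.antisymm hTC hCT
    exact ⟨x, hx, by rw [card_erase_of_mem hx]; omega⟩
  · obtain ⟨x, hxC, hxT⟩ := not_subset.1 hCT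
    exact ⟨x, hxC, by rwa [erase_eq_of_notMem hxT]⟩

section TransversalQMatroid

variable {𝔽 ι : Type*} [Field 𝔽] {n : ℕ} {S : ι → Set (Fin n)}

lemma avoidingIndices_subset_avoidingIndices_coordSub [Fintype ι] {s : Finset (Fin n → 𝔽)}
    {T : Finset (Fin n)} (hT : ∀ j ∈ T, ∃ b ∈ s, b j ≠ 0) :
    avoidingIndices S T ⊆
      avoidingIndices (fun i => (coordSub 𝔽 (S i) : Set (Fin n → 𝔽))) s := by
  intro i hi
  obtain ⟨j, hjT, hjS⟩ := mem_avoidingIndices.1 hi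
  obtain ⟨b, hbs, hbj⟩ := hT j hjT
  exact mem_avoidingIndices.2 ⟨b, hbs, fun hb => hbj (mem_coordSub_iff.1 hb j hjS)⟩

lemma avoidsT_of_isPartialQT_coordSub {C : Finset (Fin n)}
    (h : IsPartialQT (fun i => coordSub 𝔽 (S i)) (coordSub 𝔽 (C : Set (Fin n)))) :
    AvoidsT S C := by
  classical
  let e : Fin n → Fin n → 𝔽 := fun i => Pi.single i 1
  have he : e = Pi.basisFun 𝔽 (Fin n) := funext fun i => (Pi.basisFun_apply 𝔽 (Fin n) i).symm
  have hspan : span 𝔽 ((C.image e : Finset _) : Set (Fin n → 𝔽)) = coordSub 𝔽 C := by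
    rw [coe_image]
    rfl
  have hli : LinearIndepOn 𝔽 id ((C.image e : Finset _) : Set (Fin n → 𝔽)) := by
    rw [coe_image, he]
    exact ((Pi.basisFun 𝔽 (Fin n)).linearIndepOn _).id_image
  obtain ⟨g, hg, hgS⟩ := h _ (hspan ▸ subset_span) hli hspan
  have hmem : ∀ x : C, e x ∈ C.image e := fun x => mem_image_of_mem e x.2
  refine ⟨fun x => g ⟨e x, hmem x⟩, fun x y hxy => ?_, fun x hx => ?_⟩
  · have hexy : e x = e y := congrArg Subtype.val (hg hxy)
    rw [he] at hexy
    exact Subtype.ext ((Pi.basisFun 𝔽 (Fin n)).injective hexy)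
  · exact hgS ⟨e x, hmem x⟩ (single_mem_coordSub_iff.2 hx)

lemma isPartialQT_coordSub_of_le_of_finrank_add_one_eq [Fintype ι] [DecidableEq (Fin n)]
    {C : Finset (Fin n)} (hmin : ∀ x ∈ C, AvoidsT S (C.erase x))
    {H : Submodule 𝔽 (Fin n → 𝔽)} (hHC : H ≤ coordSub 𝔽 (C : Set (Fin n)))
    (hH : finrank 𝔽 H + 1 = #C) : IsPartialQT (fun i => coordSub 𝔽 (S i)) H := by
  classical
  intro β hβH hβ hβspan
  have hβC : #β + 1 = #C := by rw [← hH, ← hβspan, finrank_span_finset_eq_card hβ]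
  refine avoidsT_of_forall_card_le fun s hsβ => ?_
  let T : Finset (Fin n) := univ.filter fun j => ∃ b ∈ s, b j ≠ 0
  have hsC : ∀ b ∈ s, b ∈ coordSub 𝔽 (C : Set (Fin n)) := fun b hb => hHC (hβH (hsβ hb))
  have hTC : T ⊆ C := by
    intro j hj
    obtain ⟨b, hbs, hbj⟩ := (mem_filter.1 hj).2
    by_contra hjC
    exact hbj (mem_coordSub_iff.1 (hsC b hbs) j hjC)
  have hsT : #s ≤ #T := by
    refine card_le_card_of_linearIndepOn_of_subset_coordSub (LinearIndepOn.mono hβ hsβ)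
      fun b hb => ?_
    refine mem_coordSub_iff.2 fun j hjT => by_contra fun hbj => hjT ?_
    exact mem_filter.2 ⟨mem_univ j, b, hb, hbj⟩
  obtain ⟨x, hxC, hsx⟩ := exists_mem_le_card_erase hTC hsT (by have := card_le_card hsβ; omega)
  calc #s ≤ #(T.erase x) := hsx
    _ ≤ #(avoidingIndices S (T.erase x)) :=
      ((hmin x hxC).mono (erase_subset_erase x hTC)).card_le_card_avoidingIndices
    _ ≤ _ := card_le_card (avoidingIndices_subset_avoidingIndices_coordSub fun j hj =>
      (mem_filter.1 (mem_of_mem_erase hj)).2)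

end TransversalQMatroid

theorem stmt10_general {𝔽 : Type*} [Field 𝔽] {n k : ℕ} [DecidableEq (Fin n)]
    (S : Fin k → Set (Fin n)) (C : Finset (Fin n))
    (hdep : ¬ AvoidsT S C)
    (hmin : ∀ x ∈ C, AvoidsT S (C.erase x)) :
    ¬ IsPartialQT (fun i => coordSub 𝔽 (S i)) (coordSub 𝔽 (C : Set (Fin n)))
    ∧ ∀ H : Submodule 𝔽 (Fin n → 𝔽), H ≤ coordSub 𝔽 (C : Set (Fin n)) →
        Module.finrank 𝔽 H + 1 = Module.finrank 𝔽 (coordSub 𝔽 (C : Set (Fin n))) →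
        IsPartialQT (fun i => coordSub 𝔽 (S i)) H :=
  ⟨fun h => hdep (avoidsT_of_isPartialQT_coordSub h), fun _ hHC hH =>
    isPartialQT_coordSub_of_le_of_finrank_add_one_eq hmin hHC (hH.trans (finrank_coordSub C))⟩

/-- if `C` is a circuit of the avoidance transversal matroid, then
`φ(C)` is a cyclic space of the transversal q-matroid: `φ(C)` is dependent, but
every hyperplane of `φ(C)` is independent. -/
theorem stmt10 {𝔽 : Type*} [Field 𝔽] [Fintype 𝔽] {n k : ℕ} [DecidableEq (Fin n)]
    (S : Fin k → Set (Fin n)) (C : Finset (Fin n))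
    (hdep : ¬ AvoidsT S C)
    (hmin : ∀ x ∈ C, AvoidsT S (C.erase x)) :
    ¬ IsPartialQT (fun i => coordSub 𝔽 (S i)) (coordSub 𝔽 (C : Set (Fin n)))
    ∧ ∀ H : Submodule 𝔽 (Fin n → 𝔽), H ≤ coordSub 𝔽 (C : Set (Fin n)) →
        Module.finrank 𝔽 H + 1 = Module.finrank 𝔽 (coordSub 𝔽 (C : Set (Fin n))) →
        IsPartialQT (fun i => coordSub 𝔽 (S i)) H :=
  stmt10_general S C hdep hmin
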